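/- Graphs of conductance φ admit a trivial φ⁻¹-congestion-approximator: let G be an undirected capacitated graph without self-loops in which every vertex is incident to at least one edge, and suppose G has conductance at least φ ∈ (0, 1], i.e., c_S ≥ φ·min(vol(S), vol(V∖S)) for every nonempty proper subset S ⊊ V. Define R by (R b)_i = b_i / deg(i) for each vertex i. Then for every valid demand vector b, ‖R b‖_∞ ≤ opt(b) ≤ φ⁻¹·‖R b‖_∞. -/
import Mathlib


open scoped Classical

/-- `linf x` is the maximum absolute entry of the vector `x`, i.e. `‖x‖_∞`. -/
noncomputable def linf {ι : Type*} [Fintype ι] (x : ι → ℝ) : ℝ := ⨆ i, |x i|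

/-- The divergence of the flow `f` at vertex `v`:
`Σ_{e : head(e)=v} f_e − Σ_{e : tail(e)=v} f_e`. -/
noncomputable def divergence {V E : Type*} [Fintype V] [Fintype E] (tail head : E → V)
    (f : E → ℝ) (v : V) : ℝ :=
  ∑ e ∈ Finset.univ.filter (fun e => head e = v), f e
    - ∑ e ∈ Finset.univ.filter (fun e => tail e = v), f e

/-- `cutCap tail head cap S` is `c_S`, the total capacity of edges with exactly one
endpoint in `S`. -/
noncomputable def cutCap {V E : Type*} [Fintype V] [Fintype E] (tail head : E → V)
    (cap : E → ℝ) (S : Finset V) : ℝ :=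
  ∑ e ∈ Finset.univ.filter
      (fun e => (tail e ∈ S ∧ head e ∉ S) ∨ (tail e ∉ S ∧ head e ∈ S)), cap e

/-- The congestion of a flow `f`: `max_e |f_e| / c_e`. -/
noncomputable def congestion {E : Type*} [Fintype E] (cap : E → ℝ) (f : E → ℝ) : ℝ :=
  ⨆ e, |f e| / cap e

/-- `optG tail head cap b` is the infimum congestion over all flows routing `b`. -/
noncomputable def optG {V E : Type*} [Fintype V] [Fintype E] (tail head : E → V)
    (cap : E → ℝ) (b : V → ℝ) : ℝ :=
  sInf {t : ℝ | ∃ f : E → ℝ, divergence tail head f = b ∧ t = congestion cap f}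

/-- The degree of vertex `i`: the total capacity of edges incident to `i`. -/
noncomputable def deg {V E : Type*} [Fintype E] (tail head : E → V) (cap : E → ℝ)
    (i : V) : ℝ :=
  ∑ e ∈ Finset.univ.filter (fun e => tail e = i ∨ head e = i), cap e

/-- The volume of a vertex set: the sum of degrees of its vertices. -/
noncomputable def vol {V E : Type*} [Fintype E] (tail head : E → V) (cap : E → ℝ)
    (S : Finset V) : ℝ :=
  ∑ i ∈ S, deg tail head cap i

section Aux

open Finset

set_option linter.unusedSectionVars false
set_option linter.unusedVariables false

variable {V E : Type*} [Fintype V] [Fintype E]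

lemma deg_nonneg (tail head : E → V) (cap : E → ℝ) (hcap : ∀ e, 0 < cap e) (i : V) :
    0 ≤ deg tail head cap i := Finset.sum_nonneg fun e _ => (hcap e).le

lemma deg_pos (tail head : E → V) (cap : E → ℝ) (hcap : ∀ e, 0 < cap e)
    (hinc : ∀ i : V, ∃ e : E, tail e = i ∨ head e = i) (i : V) :
    0 < deg tail head cap i := by
  obtain ⟨e, he⟩ := hinc i
  exact Finset.sum_pos' (fun e _ => (hcap e).le) ⟨e, by simpa using he, hcap e⟩

lemma vol_mono (tail head : E → V) (cap : E → ℝ) (hcap : ∀ e, 0 < cap e)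
    {S T : Finset V} (hST : S ⊆ T) : vol tail head cap S ≤ vol tail head cap T :=
  Finset.sum_le_sum_of_subset_of_nonneg hST fun i _ _ => deg_nonneg tail head cap hcap i

lemma vol_nonneg (tail head : E → V) (cap : E → ℝ) (hcap : ∀ e, 0 < cap e) (S : Finset V) :
    0 ≤ vol tail head cap S := Finset.sum_nonneg fun i _ => deg_nonneg tail head cap hcap i

lemma vol_pos [Nonempty V] (tail head : E → V) (cap : E → ℝ) (hcap : ∀ e, 0 < cap e)
    (hinc : ∀ i : V, ∃ e : E, tail e = i ∨ head e = i) :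
    0 < vol tail head cap Finset.univ :=
  Finset.sum_pos (fun i _ => deg_pos tail head cap hcap hinc i) Finset.univ_nonempty

lemma vol_compl (tail head : E → V) (cap : E → ℝ) (S : Finset V) :
    vol tail head cap Sᶜ = vol tail head cap Finset.univ - vol tail head cap S := by
  have := Finset.sum_add_sum_compl S (deg tail head cap)
  unfold vol; linarith

lemma sum_div_mul (tail head : E → V) (f : E → ℝ) (y : V → ℝ) :
    ∑ i, divergence tail head f i * y i = ∑ e, f e * (y (head e) - y (tail e)) := by
  have h1 : ∀ g : E → V, ∑ i, (∑ e ∈ univ.filter (fun e => g e = i), f e) * y i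
      = ∑ e, f e * y (g e) := by
    intro g
    rw [← Finset.sum_fiberwise univ g (fun e => f e * y (g e))]
    refine Finset.sum_congr rfl fun i _ => ?_
    rw [Finset.sum_mul]
    exact Finset.sum_congr rfl fun e he => by rw [(Finset.mem_filter.1 he).2]
  simp only [divergence, sub_mul, Finset.sum_sub_distrib, h1, mul_sub]

/-- Divergence as a linear map. -/
noncomputable def divLin (tail head : E → V) : (E → ℝ) →ₗ[ℝ] (V → ℝ) where
  toFun f := divergence tail head f
  map_add' f g := by
    funext v
    simp only [divergence, Pi.add_apply, Finset.sum_add_distrib]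
    ring
  map_smul' c f := by
    funext v
    simp only [divergence, Pi.smul_apply, smul_eq_mul, ← Finset.mul_sum, RingHom.id_apply]
    ring

lemma absSplit (a b : ℝ) : |max a 0 - max b 0| + |max (-a) 0 - max (-b) 0| ≤ |a - b| := by
  have ia := max_zero_sub_max_neg_zero_eq_self a
  have ib := max_zero_sub_max_neg_zero_eq_self b
  rcases le_total b a with hab | hab
  · have h1 : max b 0 ≤ max a 0 := max_le_max hab le_rfl
    have h2 : max (-a) 0 ≤ max (-b) 0 := max_le_max (neg_le_neg hab) le_rfl
    rw [abs_of_nonneg (sub_nonneg.2 h1), abs_of_nonpos (sub_nonpos.2 h2),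
      abs_of_nonneg (sub_nonneg.2 hab)]
    linarith
  · have h1 : max a 0 ≤ max b 0 := max_le_max hab le_rfl
    have h2 : max (-b) 0 ≤ max (-a) 0 := max_le_max (neg_le_neg hab) le_rfl
    rw [abs_of_nonpos (sub_nonpos.2 h1), abs_of_nonneg (sub_nonneg.2 h2),
      abs_of_nonpos (sub_nonpos.2 hab)]
    linarith

lemma posneg (a : ℝ) : |a| = max a 0 + max (-a) 0 := by
  rcases le_total a 0 with h | h
  · rw [abs_of_nonpos h, max_eq_right h, max_eq_left (neg_nonneg.2 h)]; ring
  · rw [abs_of_nonneg h, max_eq_left h, max_eq_right (neg_nonpos.2 h)]; ring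

lemma clm_repr [DecidableEq V] (F : (V → ℝ) →L[ℝ] ℝ) (x : V → ℝ) :
    F x = ∑ i, x i * F (Pi.single i 1) := by
  conv_lhs => rw [← Finset.univ_sum_single x]
  rw [map_sum]
  refine Finset.sum_congr rfl fun i _ => ?_
  have h : (Pi.single i (x i) : V → ℝ) = x i • (Pi.single i (1:ℝ) : V → ℝ) := by
    rw [← Pi.single_smul, smul_eq_mul, mul_one]
  rw [h, map_smul, smul_eq_mul]

lemma le_linf {ι : Type*} [Fintype ι] (x : ι → ℝ) (i : ι) : |x i| ≤ linf x := by
  exact le_ciSup (f := fun i => |x i|) (Set.Finite.bddAbove (Set.finite_range _)) i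

lemma linf_nonneg {ι : Type*} [Fintype ι] [Nonempty ι] (x : ι → ℝ) : 0 ≤ linf x :=
  le_trans (abs_nonneg _) (le_linf x (Classical.arbitrary ι))

lemma onesided [Nonempty V] (tail head : E → V) (cap : E → ℝ) (hcap : ∀ e, 0 < cap e)
    (hinc : ∀ i : V, ∃ e : E, tail e = i ∨ head e = i)
    (φ : ℝ) (hφ0 : 0 < φ)
    (hcond : ∀ S : Finset V, S.Nonempty → S ≠ Finset.univ →
      φ * min (vol tail head cap S) (vol tail head cap Sᶜ) ≤ cutCap tail head cap S) :
    ∀ (n : ℕ) (h : V → ℝ), (univ.filter fun i => 0 < h i).card ≤ n → (∀ i, 0 ≤ h i) →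
      vol tail head cap (univ.filter fun i => 0 < h i) ≤ vol tail head cap univ / 2 →
      φ * ∑ i, deg tail head cap i * h i ≤ ∑ e, cap e * |h (head e) - h (tail e)| := by
  intro n
  induction n with
  | zero =>
    intro h hcard hh _
    have hz : ∀ i, h i = 0 := by
      intro i
      by_contra hne
      have : i ∈ univ.filter fun i => 0 < h i := by
        simp [lt_of_le_of_ne (hh i) (Ne.symm hne)]
      simp [Finset.card_eq_zero.1 (Nat.le_zero.1 hcard)] at this
    simp [hz]
  | succ n ih =>
    intro h hcard hh hvol
    set S : Finset V := univ.filter fun i => 0 < h i with hSdef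
    by_cases hSne : S.Nonempty
    case neg =>
      have hz : ∀ i, h i = 0 := by
        intro i
        by_contra hne
        exact hSne ⟨i, by simp [hSdef, lt_of_le_of_ne (hh i) (Ne.symm hne)]⟩
      simp [hz]
    case pos =>
    obtain ⟨i0, hi0S, hmin⟩ := Finset.exists_min_image S h hSne
    set t : ℝ := h i0 with htdef
    have ht : 0 < t := (Finset.mem_filter.1 hi0S).2
    have htle : ∀ i ∈ S, t ≤ h i := hmin
    set h' : V → ℝ := fun i => if 0 < h i then h i - t else 0 with h'def
    have hh' : ∀ i, 0 ≤ h' i := by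
      intro i
      by_cases h1 : 0 < h i
      · simp only [h'def, if_pos h1]
        exact sub_nonneg.2 (htle i (by simp [hSdef, h1]))
      · simp [h'def, h1]
    have hzero : ∀ i, ¬ 0 < h i → h i = 0 := fun i h1 => le_antisymm (not_lt.1 h1) (hh i)
    have hsub : (univ.filter fun i => 0 < h' i) ⊆ S := by
      intro i hi
      have h2 : 0 < h' i := (Finset.mem_filter.1 hi).2
      by_contra hiS
      have h1 : ¬ 0 < h i := by simpa [hSdef] using hiS
      simp [h'def, h1] at h2
    have hi0not : i0 ∉ (univ.filter fun i => 0 < h' i) := by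
      have : h' i0 = 0 := by simp [h'def, (Finset.mem_filter.1 hi0S).2, htdef]
      simp [this]
    have hcard' : (univ.filter fun i => 0 < h' i).card ≤ n := by
      have : (univ.filter fun i => 0 < h' i) ⊂ S := ⟨hsub, fun hc => hi0not (hc hi0S)⟩
      have h2 := Finset.card_lt_card this
      omega
    have hvol' : vol tail head cap (univ.filter fun i => 0 < h' i) ≤ vol tail head cap univ / 2 :=
      le_trans (vol_mono tail head cap hcap hsub) hvol
    have ihres := ih h' hcard' hh' hvol'
    -- sum identity for vertex sums
    have hsum1 : ∑ i, deg tail head cap i * h i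
        = ∑ i, deg tail head cap i * h' i + t * vol tail head cap S := by
      have hterm : ∀ i, deg tail head cap i * h i
          = deg tail head cap i * h' i + (if i ∈ S then deg tail head cap i * t else 0) := by
        intro i
        by_cases h1 : 0 < h i
        · have hiS : i ∈ S := by simp [hSdef, h1]
          simp only [h'def, if_pos h1, if_pos hiS]
          ring
        · have hiS : i ∉ S := by simp [hSdef, h1]
          simp only [h'def, if_neg h1, if_neg hiS, hzero i h1]
          ring
      rw [Finset.sum_congr rfl fun i _ => hterm i, Finset.sum_add_distrib]
      congr 1
      rw [Finset.sum_ite_mem, Finset.univ_inter, vol, Finset.mul_sum]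
      exact Finset.sum_congr rfl fun i _ => mul_comm _ _
    -- edge identity
    have hedge : ∀ e, |h (head e) - h (tail e)| = |h' (head e) - h' (tail e)|
        + (if (tail e ∈ S ∧ head e ∉ S) ∨ (tail e ∉ S ∧ head e ∈ S) then t else 0) := by
      intro e
      have hmemS : ∀ i, i ∈ S ↔ 0 < h i := fun i => by simp [hSdef]
      by_cases h1 : 0 < h (tail e) <;> by_cases h2 : 0 < h (head e)
      · have hcross : ¬ ((tail e ∈ S ∧ head e ∉ S) ∨ (tail e ∉ S ∧ head e ∈ S)) := by
          simp [hmemS, h1, h2]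
        rw [if_neg hcross, add_zero]
        simp only [h'def, if_pos h1, if_pos h2]
        congr 1
        ring
      · have hcross : (tail e ∈ S ∧ head e ∉ S) ∨ (tail e ∉ S ∧ head e ∈ S) := by
          simp [hmemS, h1, h2]
        rw [if_pos hcross]
        have hhe0 : h (head e) = 0 := hzero _ h2
        have htt : t ≤ h (tail e) := htle _ ((hmemS _).2 h1)
        simp only [h'def, if_pos h1, if_neg h2, hhe0]
        rw [zero_sub, zero_sub, abs_neg, abs_neg, abs_of_nonneg h1.le,
          abs_of_nonneg (sub_nonneg.2 htt)]
        ring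
      · have hcross : (tail e ∈ S ∧ head e ∉ S) ∨ (tail e ∉ S ∧ head e ∈ S) := by
          simp [hmemS, h1, h2]
        rw [if_pos hcross]
        have hte0 : h (tail e) = 0 := hzero _ h1
        have htt : t ≤ h (head e) := htle _ ((hmemS _).2 h2)
        simp only [h'def, if_neg h1, if_pos h2, hte0]
        rw [sub_zero, sub_zero, abs_of_nonneg h2.le, abs_of_nonneg (sub_nonneg.2 htt)]
        ring
      · have hcross : ¬ ((tail e ∈ S ∧ head e ∉ S) ∨ (tail e ∉ S ∧ head e ∈ S)) := by
          simp [hmemS, h1, h2]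
        rw [if_neg hcross, add_zero]
        simp [h'def, h1, h2, hzero _ h1, hzero _ h2]
    have hsum2 : ∑ e, cap e * |h (head e) - h (tail e)|
        = ∑ e, cap e * |h' (head e) - h' (tail e)| + t * cutCap tail head cap S := by
      rw [Finset.sum_congr rfl fun e _ => by rw [hedge e, mul_add], Finset.sum_add_distrib]
      congr 1
      rw [Finset.sum_congr rfl fun e (_ : e ∈ univ) => by
        rw [mul_ite, mul_zero]]
      rw [Finset.sum_ite, Finset.sum_const_zero, add_zero, cutCap, Finset.mul_sum]
      exact Finset.sum_congr rfl fun e _ => mul_comm _ _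
    -- conductance bound
    have hSneuniv : S ≠ univ := by
      intro hc
      have h1 := vol_pos tail head cap hcap hinc (E := E)
      rw [hc] at hvol
      linarith
    have hvolc : vol tail head cap S ≤ vol tail head cap Sᶜ := by
      rw [vol_compl]
      linarith
    have hcut : φ * vol tail head cap S ≤ cutCap tail head cap S := by
      have := hcond S hSne hSneuniv
      rwa [min_eq_left hvolc] at this
    have h3 : φ * (t * vol tail head cap S) ≤ t * cutCap tail head cap S := by
      calc φ * (t * vol tail head cap S) = t * (φ * vol tail head cap S) := by ring
        _ ≤ t * cutCap tail head cap S := mul_le_mul_of_nonneg_left hcut ht.le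
    rw [hsum1, hsum2, mul_add]
    exact add_le_add ihres h3

lemma exists_median [Nonempty V] (tail head : E → V) (cap : E → ℝ) (hcap : ∀ e, 0 < cap e)
    (y : V → ℝ) :
    ∃ c : ℝ, vol tail head cap (univ.filter fun i => c < y i) ≤ vol tail head cap univ / 2 ∧
      vol tail head cap (univ.filter fun i => y i < c) ≤ vol tail head cap univ / 2 := by
  have hvnn : 0 ≤ vol tail head cap (univ : Finset V) := vol_nonneg tail head cap hcap _
  set T : Finset V := univ.filter fun i =>
    vol tail head cap univ / 2 ≤ vol tail head cap (univ.filter fun j => y i ≤ y j) with hT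
  have hTne : T.Nonempty := by
    obtain ⟨imin, -, hminy⟩ := Finset.exists_min_image univ y univ_nonempty
    refine ⟨imin, ?_⟩
    have hfull : (univ.filter fun j => y imin ≤ y j) = univ :=
      Finset.filter_true_of_mem fun j _ => hminy j (mem_univ j)
    simp only [hT, Finset.mem_filter, mem_univ, true_and, hfull]
    linarith
  obtain ⟨m, hmT, hmmax⟩ := Finset.exists_max_image T y hTne
  refine ⟨y m, ?_, ?_⟩
  · by_contra hcon
    push_neg at hcon
    have hne : (univ.filter fun i => y m < y i).Nonempty := by
      rw [Finset.nonempty_iff_ne_empty]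
      intro hemp
      rw [hemp] at hcon
      simp only [vol, Finset.sum_empty] at hcon
      have h0 : (0:ℝ) ≤ ∑ i, deg tail head cap i :=
        Finset.sum_nonneg fun i _ => deg_nonneg tail head cap hcap i
      linarith
    obtain ⟨m', hm'mem, hm'min⟩ := Finset.exists_min_image _ y hne
    have hsub : (univ.filter fun i => y m < y i) ⊆ (univ.filter fun j => y m' ≤ y j) := by
      intro j hj
      simp only [Finset.mem_filter, mem_univ, true_and] at hj ⊢
      exact hm'min j (by simp [hj])
    have hm'T : m' ∈ T := by
      simp only [hT, Finset.mem_filter, mem_univ, true_and]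
      exact le_of_lt (lt_of_lt_of_le hcon (vol_mono tail head cap hcap hsub))
    have : y m < y m' := (Finset.mem_filter.1 hm'mem).2
    linarith [hmmax m' hm'T]
  · have hge : vol tail head cap univ / 2
        ≤ vol tail head cap (univ.filter fun j => y m ≤ y j) := by
      simpa [hT] using (Finset.mem_filter.1 hmT).2
    have hsplit := Finset.sum_filter_add_sum_filter_not univ (fun j => y m ≤ y j)
      (deg tail head cap)
    have hset : (univ.filter fun j => ¬ y m ≤ y j) = (univ.filter fun i => y i < y m) := by
      apply Finset.filter_congr
      intro j _
      simp [not_le]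
    rw [hset] at hsplit
    have : vol tail head cap (univ.filter fun i => y i < y m)
        = vol tail head cap univ - vol tail head cap (univ.filter fun j => y m ≤ y j) := by
      unfold vol; linarith
    linarith

/-- Key existence: a flow routing `b` with per-edge congestion at most
`φ⁻¹ * ‖R b‖_∞`. -/
lemma exists_good_flow [Nonempty V] [Nonempty E]
    (tail head : E → V) (cap : E → ℝ) (hcap : ∀ e, 0 < cap e)
    (hinc : ∀ i : V, ∃ e : E, tail e = i ∨ head e = i)
    (φ : ℝ) (hφ0 : 0 < φ)
    (hcond : ∀ S : Finset V, S.Nonempty → S ≠ Finset.univ →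
      φ * min (vol tail head cap S) (vol tail head cap Sᶜ) ≤ cutCap tail head cap S)
    (b : V → ℝ) (hb : ∑ v, b v = 0) :
    ∃ f : E → ℝ, divergence tail head f = b ∧
      ∀ e, |f e| ≤ (φ⁻¹ * linf fun i => b i / deg tail head cap i) * cap e := by
  set L : ℝ := linf fun i => b i / deg tail head cap i with hLdef
  have hL0 : 0 ≤ L := linf_nonneg _
  set t : ℝ := φ⁻¹ * L with htdef
  have ht0 : 0 ≤ t := mul_nonneg (inv_nonneg.2 hφ0.le) hL0
  have hd : ∀ i, 0 < deg tail head cap i := deg_pos tail head cap hcap hinc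
  by_contra hcon
  set D : (E → ℝ) →ₗ[ℝ] (V → ℝ) := divLin tail head with hD
  set B : Set (E → ℝ) := Set.univ.pi fun e => Set.Icc (-(t * cap e)) (t * cap e) with hB
  have hBconv : Convex ℝ B := convex_pi fun e _ => convex_Icc _ _
  have hBcomp : IsCompact B := isCompact_univ_pi fun e => isCompact_Icc
  have hDcont : Continuous D := D.continuous_of_finiteDimensional
  have hAcomp : IsCompact (D '' B) := hBcomp.image hDcont
  have hAconv : Convex ℝ (D '' B) := hBconv.linear_image D
  have hbA : b ∉ D '' B := by
    rintro ⟨f, hfB, hfb⟩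
    refine hcon ⟨f, hfb, fun e => ?_⟩
    have h1 := hfB e (Set.mem_univ e)
    rw [Set.mem_Icc] at h1
    exact abs_le.2 ⟨h1.1, h1.2⟩
  obtain ⟨F, u, hFlt, hFb⟩ := geometric_hahn_banach_closed_point hAconv hAcomp.isClosed hbA
  set y : V → ℝ := fun i => F (Pi.single i 1) with hy
  have repr : ∀ x : V → ℝ, F x = ∑ i, x i * y i := fun x => clm_repr F x
  set g : E → ℝ := fun e => if y (tail e) ≤ y (head e) then t * cap e else -(t * cap e)
    with hgdef
  have hgB : g ∈ B := by
    rw [hB, Set.mem_univ_pi]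
    intro e
    have htc : 0 ≤ t * cap e := mul_nonneg ht0 (hcap e).le
    by_cases hy1 : y (tail e) ≤ y (head e) <;>
      simp only [hgdef, if_pos, if_neg, hy1, ite_true, ite_false, Set.mem_Icc] <;>
      constructor <;> linarith
  have hDg : F (D g) = t * ∑ e, cap e * |y (head e) - y (tail e)| := by
    have h1 : ∑ i, (D g) i * y i = ∑ e, g e * (y (head e) - y (tail e)) :=
      sum_div_mul tail head g y
    rw [repr (D g), h1, Finset.mul_sum]
    refine Finset.sum_congr rfl fun e _ => ?_
    by_cases hy1 : y (tail e) ≤ y (head e)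
    · simp only [hgdef, if_pos hy1]
      rw [abs_of_nonneg (sub_nonneg.2 hy1)]
      ring
    · simp only [hgdef, if_neg hy1]
      rw [abs_of_nonpos (sub_nonpos.2 (le_of_not_ge hy1))]
      ring
  have hlt : t * ∑ e, cap e * |y (head e) - y (tail e)| < ∑ i, b i * y i := by
    have h2 : F (D g) < u := hFlt _ ⟨g, hgB, rfl⟩
    have h3 : u < F b := hFb
    rw [hDg] at h2
    rw [repr b] at h3
    linarith
  obtain ⟨c, hc1, hc2⟩ := exists_median tail head cap hcap y
  set p : V → ℝ := fun i => max (y i - c) 0 with hpdef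
  set q : V → ℝ := fun i => max (-(y i - c)) 0 with hqdef
  have hfp : (Finset.univ.filter fun i => 0 < p i) = (Finset.univ.filter fun i => c < y i) := by
    apply Finset.filter_congr
    intro i _
    simp [hpdef, lt_max_iff, sub_pos]
  have hfq : (Finset.univ.filter fun i => 0 < q i) = (Finset.univ.filter fun i => y i < c) := by
    apply Finset.filter_congr
    intro i _
    simp [hqdef, lt_max_iff, sub_neg]
  have hps := onesided tail head cap hcap hinc φ hφ0 hcond
    (Finset.univ.filter fun i => 0 < p i).card p le_rfl (fun i => le_max_right _ _)
    (by rw [hfp]; exact hc1)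
  have hqs := onesided tail head cap hcap hinc φ hφ0 hcond
    (Finset.univ.filter fun i => 0 < q i).card q le_rfl (fun i => le_max_right _ _)
    (by rw [hfq]; exact hc2)
  have hc4 : ∑ i, deg tail head cap i * p i
      ≤ φ⁻¹ * ∑ e, cap e * |p (head e) - p (tail e)| := by
    have := mul_le_mul_of_nonneg_left hps (inv_nonneg.2 hφ0.le)
    rwa [← mul_assoc, inv_mul_cancel₀ hφ0.ne', one_mul] at this
  have hc5 : ∑ i, deg tail head cap i * q i
      ≤ φ⁻¹ * ∑ e, cap e * |q (head e) - q (tail e)| := by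
    have := mul_le_mul_of_nonneg_left hqs (inv_nonneg.2 hφ0.le)
    rwa [← mul_assoc, inv_mul_cancel₀ hφ0.ne', one_mul] at this
  have hc6 : ∑ e, cap e * |p (head e) - p (tail e)| + ∑ e, cap e * |q (head e) - q (tail e)|
      ≤ ∑ e, cap e * |y (head e) - y (tail e)| := by
    rw [← Finset.sum_add_distrib]
    refine Finset.sum_le_sum fun e _ => ?_
    have h5 := absSplit (y (head e) - c) (y (tail e) - c)
    have heq : (y (head e) - c) - (y (tail e) - c) = y (head e) - y (tail e) := by ring
    rw [heq] at h5
    calc cap e * |p (head e) - p (tail e)| + cap e * |q (head e) - q (tail e)|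
        = cap e * (|max (y (head e) - c) 0 - max (y (tail e) - c) 0|
          + |max (-(y (head e) - c)) 0 - max (-(y (tail e) - c)) 0|) := by
          simp only [hpdef, hqdef]; ring
      _ ≤ cap e * |y (head e) - y (tail e)| := mul_le_mul_of_nonneg_left h5 (hcap e).le
  have hc0 : ∑ i, b i * y i = ∑ i, b i * (y i - c) := by
    simp only [mul_sub]
    rw [Finset.sum_sub_distrib, ← Finset.sum_mul, hb, zero_mul, sub_zero]
  have hc3 : ∑ i, b i * (y i - c) ≤ L * (∑ i, deg tail head cap i * p i
      + ∑ i, deg tail head cap i * q i) := by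
    have step1 : ∑ i, b i * (y i - c)
        ≤ ∑ i, (L * deg tail head cap i) * (p i + q i) := by
      refine Finset.sum_le_sum fun i _ => ?_
      have hbi : |b i| ≤ L * deg tail head cap i := by
        have h4 := le_linf (fun i => b i / deg tail head cap i) i
        rw [← hLdef] at h4
        rw [abs_div, abs_of_pos (hd i), div_le_iff₀ (hd i)] at h4
        linarith
      have hpn : |y i - c| = p i + q i := by
        simp only [hpdef, hqdef]
        exact posneg _
      calc b i * (y i - c) ≤ |b i * (y i - c)| := le_abs_self _
        _ = |b i| * |y i - c| := abs_mul _ _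
        _ = |b i| * (p i + q i) := by rw [hpn]
        _ ≤ (L * deg tail head cap i) * (p i + q i) :=
            mul_le_mul_of_nonneg_right hbi
              (add_nonneg (le_max_right _ _) (le_max_right _ _))
    calc ∑ i, b i * (y i - c) ≤ ∑ i, (L * deg tail head cap i) * (p i + q i) := step1
      _ = L * (∑ i, deg tail head cap i * p i + ∑ i, deg tail head cap i * q i) := by
          rw [← Finset.sum_add_distrib, Finset.mul_sum]
          exact Finset.sum_congr rfl fun i _ => by ring
  have final : ∑ i, b i * y i ≤ t * ∑ e, cap e * |y (head e) - y (tail e)| := by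
    calc ∑ i, b i * y i = ∑ i, b i * (y i - c) := hc0
      _ ≤ L * (∑ i, deg tail head cap i * p i + ∑ i, deg tail head cap i * q i) := hc3
      _ ≤ L * (φ⁻¹ * ∑ e, cap e * |p (head e) - p (tail e)|
          + φ⁻¹ * ∑ e, cap e * |q (head e) - q (tail e)|) :=
          mul_le_mul_of_nonneg_left (add_le_add hc4 hc5) hL0
      _ = (φ⁻¹ * L) * (∑ e, cap e * |p (head e) - p (tail e)|
          + ∑ e, cap e * |q (head e) - q (tail e)|) := by ring
      _ ≤ (φ⁻¹ * L) * ∑ e, cap e * |y (head e) - y (tail e)| :=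
          mul_le_mul_of_nonneg_left hc6 ht0
      _ = t * ∑ e, cap e * |y (head e) - y (tail e)| := by rw [htdef]
  linarith

end Aux

/-- Graphs of conductance `φ` admit a trivial `φ⁻¹`-congestion-approximator: with
`(R b)_i = b_i / deg(i)`, every valid demand `b` satisfies
`‖R b‖_∞ ≤ opt(b) ≤ φ⁻¹·‖R b‖_∞`. -/
theorem conductance_congestionApprox {V E : Type*} [Fintype V] [Fintype E]
    [Nonempty V] [Nonempty E]
    (tail head : E → V) (cap : E → ℝ) (hcap : ∀ e, 0 < cap e)
    (hloop : ∀ e, tail e ≠ head e)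
    (hinc : ∀ i : V, ∃ e : E, tail e = i ∨ head e = i)
    (φ : ℝ) (hφ0 : 0 < φ) (hφ1 : φ ≤ 1)
    (hcond : ∀ S : Finset V, S.Nonempty → S ≠ Finset.univ →
      φ * min (vol tail head cap S) (vol tail head cap Sᶜ) ≤ cutCap tail head cap S)
    (b : V → ℝ) (hb : ∑ v, b v = 0) :
    linf (fun i => b i / deg tail head cap i) ≤ optG tail head cap b ∧
      optG tail head cap b ≤ φ⁻¹ * linf (fun i => b i / deg tail head cap i) := by
  classical
  obtain ⟨f0, hf0div, hf0le⟩ :=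
    exists_good_flow tail head cap hcap hinc φ hφ0 hcond b hb
  set t : ℝ := φ⁻¹ * linf fun i => b i / deg tail head cap i with htdef
  have hd : ∀ i, 0 < deg tail head cap i := deg_pos tail head cap hcap hinc
  have hbddE : ∀ f : E → ℝ, BddAbove (Set.range fun e => |f e| / cap e) :=
    fun f => Set.Finite.bddAbove (Set.finite_range _)
  have hcong_nonneg : ∀ f : E → ℝ, 0 ≤ congestion cap f := by
    intro f
    obtain ⟨e0⟩ := (inferInstance : Nonempty E)
    exact le_trans (div_nonneg (abs_nonneg _) (hcap e0).le) (le_ciSup (hbddE f) e0)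
  have hcong_bound : ∀ (f : E → ℝ) (e : E), |f e| ≤ congestion cap f * cap e := by
    intro f e
    have := le_ciSup (hbddE f) e
    rwa [div_le_iff₀ (hcap e)] at this
  have hSne : congestion cap f0 ∈
      {s : ℝ | ∃ f : E → ℝ, divergence tail head f = b ∧ s = congestion cap f} :=
    ⟨f0, hf0div, rfl⟩
  have hbdd : BddBelow {s : ℝ | ∃ f : E → ℝ, divergence tail head f = b ∧ s = congestion cap f} := by
    refine ⟨0, ?_⟩
    rintro s ⟨f, -, rfl⟩
    exact hcong_nonneg f
  constructor
  · -- lower bound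
    refine le_csInf ⟨_, hSne⟩ ?_
    rintro s ⟨f, hdiv, rfl⟩
    refine ciSup_le fun i => ?_
    have hsplit : Finset.univ.filter (fun e => tail e = i ∨ head e = i)
        = Finset.univ.filter (fun e => tail e = i) ∪ Finset.univ.filter (fun e => head e = i) :=
      Finset.filter_or _ _ _
    have hdisj : Disjoint (Finset.univ.filter fun e => tail e = i)
        (Finset.univ.filter fun e => head e = i) := by
      rw [Finset.disjoint_left]
      intro e he1 he2
      exact hloop e (by rw [(Finset.mem_filter.1 he1).2, (Finset.mem_filter.1 he2).2])
    have hdeg : deg tail head cap i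
        = ∑ e ∈ Finset.univ.filter (fun e => tail e = i), cap e
          + ∑ e ∈ Finset.univ.filter (fun e => head e = i), cap e := by
      rw [deg, hsplit, Finset.sum_union hdisj]
    have hbi : |b i| ≤ congestion cap f * deg tail head cap i := by
      rw [← hdiv]
      calc |divergence tail head f i|
          ≤ |∑ e ∈ Finset.univ.filter (fun e => head e = i), f e|
            + |∑ e ∈ Finset.univ.filter (fun e => tail e = i), f e| := abs_sub _ _
        _ ≤ (∑ e ∈ Finset.univ.filter (fun e => head e = i), |f e|)
            + ∑ e ∈ Finset.univ.filter (fun e => tail e = i), |f e| :=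
            add_le_add (Finset.abs_sum_le_sum_abs _ _) (Finset.abs_sum_le_sum_abs _ _)
        _ ≤ (∑ e ∈ Finset.univ.filter (fun e => head e = i), congestion cap f * cap e)
            + ∑ e ∈ Finset.univ.filter (fun e => tail e = i), congestion cap f * cap e :=
            add_le_add (Finset.sum_le_sum fun e _ => hcong_bound f e)
              (Finset.sum_le_sum fun e _ => hcong_bound f e)
        _ = congestion cap f * deg tail head cap i := by
            rw [hdeg, ← Finset.mul_sum, ← Finset.mul_sum]
            ring
    rw [abs_div, abs_of_pos (hd i), div_le_iff₀ (hd i)]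
    linarith
  · -- upper bound
    have hcong0 : congestion cap f0 ≤ t := by
      refine ciSup_le fun e => ?_
      rw [div_le_iff₀ (hcap e)]
      exact hf0le e
    exact le_trans (csInf_le hbdd hSne) hcong0
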